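/- (Second-order Taylor approximation of f at a stationary point, with explicit cubic error.) Let σ̄ ∈ M_r be a stationary point, i.e. g_i(σ̄) ≠ 0 and σ̄_i = g_i(σ̄)/‖g_i(σ̄)‖ for every i. Let u ∈ T_σ̄ M_r with ‖u‖_F = 1 and let 0 ≤ t ≤ 1. Then |f(σ̄(t)) − f(σ̄) − t² Σ_{i=1}^n (⟨u_i, v_i⟩ − ‖u_i‖² ‖g_i(σ̄)‖)| ≤ (5 n ‖A‖₁ / 2) t³, where v_i = Σ_{j≠i} A_{ij} u_j. -/

import Mathlib

open scoped BigOperators RealInnerProductSpace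
open Finset Matrix

noncomputable section

/-- Points on the sphere live in Euclidean space `ℝ^r`. -/
abbrev Pt (r : ℕ) := EuclideanSpace ℝ (Fin r)

/-- A configuration: `n` rows, each a vector in `ℝ^r`. -/
abbrev Conf (n r : ℕ) := Fin n → Pt r

/-- Membership in the manifold `M_r`: all rows are unit vectors. -/
def inM {n r : ℕ} (σ : Conf n r) : Prop := ∀ i, ‖σ i‖ = 1

/-- `g_i(σ) = ∑_{j ≠ i} A_{ij} σ_j`. -/
def gvec {n r : ℕ} (A : Matrix (Fin n) (Fin n) ℝ) (σ : Conf n r) (i : Fin n) : Pt r :=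
  ∑ j ∈ univ.erase i, A i j • σ j

/-- The objective `f(σ) = ⟨A, σσᵀ⟩ = ∑_{i,j} A_{ij} ⟨σ_i, σ_j⟩`. -/
def fval {n r : ℕ} (A : Matrix (Fin n) (Fin n) ℝ) (σ : Conf n r) : ℝ :=
  ∑ i, ∑ j, A i j * ⟪σ i, σ j⟫

/-- The BCM update `T_i(σ)`: replace row `i` by `g_i(σ)/‖g_i(σ)‖`
    (unchanged if `g_i(σ) = 0`). -/
def Tupd {n r : ℕ} (A : Matrix (Fin n) (Fin n) ℝ) (σ : Conf n r) (i : Fin n) : Conf n r :=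
  letI := Classical.dec (gvec A σ i = 0)
  Function.update σ i (if gvec A σ i = 0 then σ i else ‖gvec A σ i‖⁻¹ • gvec A σ i)

/-- `‖A‖₁ = max_j ∑_i |A_{ij}|`. -/
def Anorm1 {n : ℕ} (A : Matrix (Fin n) (Fin n) ℝ) : ℝ := ⨆ j, ∑ i, |A i j|

/-- `‖A‖_{1,1} = ∑_{i,j} |A_{ij}|`. -/
def Anorm11 {n : ℕ} (A : Matrix (Fin n) (Fin n) ℝ) : ℝ := ∑ i, ∑ j, |A i j|

/-- Squared Riemannian gradient norm
    `‖grad f(σ)‖_F² = 2 ∑_i (‖g_i‖² − ⟨σ_i, g_i⟩²)`. -/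
def gradNormSq {n r : ℕ} (A : Matrix (Fin n) (Fin n) ℝ) (σ : Conf n r) : ℝ :=
  2 * ∑ i, (‖gvec A σ i‖ ^ 2 - ⟪σ i, gvec A σ i⟫ ^ 2)

/-- The geodesic through `σ` in direction `u`, at time `t`:
    `σ_i(t) = σ_i cos(‖u_i‖ t) + (u_i/‖u_i‖) sin(‖u_i‖ t)` (rows with `u_i = 0` stay fixed). -/
def geo {n r : ℕ} (σ u : Conf n r) (t : ℝ) : Conf n r :=
  fun i => Real.cos (‖u i‖ * t) • σ i + (Real.sin (‖u i‖ * t) / ‖u i‖) • u i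

/-- Tangency: `u ∈ T_σ M_r` iff every row of `u` is orthogonal to the
    corresponding row of `σ`. -/
def tangent {n r : ℕ} (σ u : Conf n r) : Prop := ∀ i, ⟪u i, σ i⟫ = 0

/-- Squared Frobenius norm `‖u‖_F² = ∑_i ‖u_i‖²`. -/
def fnormSq {n r : ℕ} (u : Conf n r) : ℝ := ∑ i, ‖u i‖ ^ 2

/-- Riemannian gradient pairing `G_σ(u) = 2 ∑_i ⟨u_i, g_i(σ)⟩`. -/
def Gform {n r : ℕ} (A : Matrix (Fin n) (Fin n) ℝ) (σ u : Conf n r) : ℝ :=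
  2 * ∑ i, ⟪u i, gvec A σ i⟫

/-- Riemannian Hessian quadratic form
    `H_σ(u) = 2 ∑_i (⟨u_i, v_i⟩ − ‖u_i‖² ⟨σ_i, g_i(σ)⟩)` with `v_i = ∑_{j≠i} A_{ij} u_j`. -/
def Hform {n r : ℕ} (A : Matrix (Fin n) (Fin n) ℝ) (σ u : Conf n r) : ℝ :=
  2 * ∑ i, (⟪u i, gvec A u i⟫ - ‖u i‖ ^ 2 * ⟪σ i, gvec A σ i⟫)

/-- Stationary point: `g_i(σ) ≠ 0` and `σ_i = g_i(σ)/‖g_i(σ)‖` for all `i`. -/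
def stationary {n r : ℕ} (A : Matrix (Fin n) (Fin n) ℝ) (σ : Conf n r) : Prop :=
  ∀ i, gvec A σ i ≠ 0 ∧ σ i = ‖gvec A σ i‖⁻¹ • gvec A σ i

/-- `w ∈ V_σ = {σB : Bᵀ = −B}` (rows of `σB` given by `(σB)_{ik} = ∑_l σ_{il} B_{lk}`). -/
def inV {n r : ℕ} (σ w : Conf n r) : Prop :=
  ∃ B : Matrix (Fin r) (Fin r) ℝ, Bᵀ = -B ∧ ∀ i k, w i k = ∑ l, σ i l * B l k

/-- Frobenius-orthogonality of `u` to the subspace `V_σ`. -/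
def perpV {n r : ℕ} (σ u : Conf n r) : Prop :=
  ∀ w : Conf n r, inV σ w → ∑ i, ⟪u i, w i⟫ = 0

/-- `f` satisfies quadratic decay at `σ` with constant `μ`:
    `H_σ(u) ≤ −μ ‖u‖_F²` for all tangent `u` Frobenius-orthogonal to `V_σ`. -/
def quadDecay {n r : ℕ} (A : Matrix (Fin n) (Fin n) ℝ) (σ : Conf n r) (μ : ℝ) : Prop :=
  ∀ u : Conf n r, tangent σ u → perpV σ u → Hform A σ u ≤ -μ * fnormSq u

/-- Geodesic distance `dist(σ, σ') = (∑_i arccos⟨σ_i, σ'_i⟩²)^{1/2}`. -/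
def gdist {n r : ℕ} (σ σ' : Conf n r) : ℝ :=
  Real.sqrt (∑ i, Real.arccos ⟪σ i, σ' i⟫ ^ 2)

/-- Right-multiplication of a configuration by a matrix `Q ∈ ℝ^{r×r}` (rowwise). -/
def rowMulQ {n r : ℕ} (σ : Conf n r) (Q : Matrix (Fin r) (Fin r) ℝ) : Conf n r :=
  fun i => (EuclideanSpace.equiv (Fin r) ℝ).symm (fun k => ∑ l, σ i l * Q l k)

/-- Distance to the equivalence class `[σ'] = {σ'Q : Q ∈ O(r)}`. -/
def distClass {n r : ℕ} (σ σ' : Conf n r) : ℝ :=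
  ⨅ Q : {Q : Matrix (Fin r) (Fin r) ℝ // Qᵀ * Q = 1}, gdist σ (rowMulQ σ' Q.1)

/-- `f* = sup_{σ ∈ M_r} f(σ)`. -/
def fstar {n r : ℕ} (A : Matrix (Fin n) (Fin n) ℝ) : ℝ :=
  sSup (fval A '' {σ : Conf n r | inM σ})

/-- The optimal value of the SDP with unit-diagonal constraints. -/
def SDPval {n : ℕ} (A : Matrix (Fin n) (Fin n) ℝ) : ℝ :=
  sSup {y | ∃ X : Matrix (Fin n) (Fin n) ℝ, X.PosSemidef ∧ (∀ i, X i i = 1) ∧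
    y = ∑ i, ∑ j, A i j * X i j}

/-- BCM iterates along a sequence of coordinates `ω`. -/
def iterSeq {n r : ℕ} (A : Matrix (Fin n) (Fin n) ℝ) (σ0 : Conf n r) (ω : ℕ → Fin n) :
    ℕ → Conf n r
  | 0 => σ0
  | k + 1 => Tupd A (iterSeq A σ0 ω k) (ω k)

/-- The set of rows where `u` is nonzero. -/
def suppu {n r : ℕ} (u : Conf n r) : Finset (Fin n) :=
  letI := Classical.decPred (fun i : Fin n => u i ≠ 0)
  Finset.univ.filter (fun i : Fin n => u i ≠ 0)

/-!
Each row of `σ̄(t)` moves on a great circle, so `⟪σ̄ᵢ(t), σ̄ⱼ(t)⟫` has an explicit second-order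
expansion in `t` whose remainder, by the Taylor bounds for `sin` and `cos`, is at most `5/2 · t³`
once `‖uᵢ‖, ‖uⱼ‖ ≤ 1`. Summing against `A` and using its symmetry, the expansion of `f(σ̄(t))` is
`f(σ̄) + t G_σ̄(u) + t²/2 H_σ̄(u)` up to an error of `5/2 · t³ ∑ᵢⱼ |Aᵢⱼ| ≤ 5/2 · n ‖A‖₁ t³`.
At a stationary point `gᵢ(σ̄) = ‖gᵢ(σ̄)‖ σ̄ᵢ`, so the gradient term vanishes on tangent vectors
and `⟪σ̄ᵢ, gᵢ(σ̄)⟫ = ‖gᵢ(σ̄)‖` in the Hessian term.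
-/

open Real

theorem abs_cos_sub_one_le (a : ℝ) : |cos a - 1| ≤ a ^ 2 / 2 := by
  rw [abs_sub_comm, abs_of_nonneg (by linarith [cos_le_one a])]
  linarith [one_sub_sq_div_two_le_cos (x := a)]

theorem abs_cos_mul_cos_sub_le {a b : ℝ} (ha : |a| ≤ 1) (hb : |b| ≤ 1) :
    |cos a * cos b - (1 - (a ^ 2 + b ^ 2) / 2)| ≤ a ^ 2 * b ^ 2 / 4 + 5 / 96 * (a ^ 4 + b ^ 4) := by
  have ha4 := cos_bound ha
  have hb4 := cos_bound hb
  rw [Even.pow_abs (by decide)] at ha4 hb4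
  calc |cos a * cos b - (1 - (a ^ 2 + b ^ 2) / 2)|
      = |(cos a - 1) * (cos b - 1) + (cos a - (1 - a ^ 2 / 2)) + (cos b - (1 - b ^ 2 / 2))| := by
        ring_nf
    _ ≤ |cos a - 1| * |cos b - 1| + |cos a - (1 - a ^ 2 / 2)| + |cos b - (1 - b ^ 2 / 2)| := by
        rw [← abs_mul]; exact abs_add_three _ _ _
    _ ≤ a ^ 2 / 2 * (b ^ 2 / 2) + a ^ 4 * (5 / 96) + b ^ 4 * (5 / 96) := by
        gcongr
        · exact abs_cos_sub_one_le a
        · exact abs_cos_sub_one_le b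
    _ = _ := by ring

theorem abs_cos_mul_sin_sub_le (a b : ℝ) :
    |cos a * sin b - b| ≤ a ^ 2 * |b| / 2 + |b| ^ 3 / 6 := by
  calc |cos a * sin b - b| = |(cos a - 1) * sin b + (sin b - b)| := by ring_nf
    _ ≤ |cos a - 1| * |sin b| + |b - sin b| := by
        rw [← abs_mul, abs_sub_comm b]; exact abs_add_le _ _
    _ ≤ a ^ 2 / 2 * |b| + |b| ^ 3 / 6 :=
        add_le_add (mul_le_mul (abs_cos_sub_one_le a) abs_sin_le_abs (abs_nonneg _)
          (by positivity)) (abs_sub_sin_le b)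
    _ = _ := by ring

theorem abs_sin_mul_sin_sub_le (a b : ℝ) :
    |sin a * sin b - a * b| ≤ (|a| * |b| ^ 3 + |b| * |a| ^ 3) / 6 := by
  calc |sin a * sin b - a * b| = |sin a * (b - sin b) + b * (a - sin a)| := by
        rw [← abs_neg]; ring_nf
    _ ≤ |sin a| * |b - sin b| + |b| * |a - sin a| := by
        rw [← abs_mul, ← abs_mul]; exact abs_add_le _ _
    _ ≤ |a| * (|b| ^ 3 / 6) + |b| * (|a| ^ 3 / 6) :=
        add_le_add (mul_le_mul abs_sin_le_abs (abs_sub_sin_le b) (abs_nonneg _) (abs_nonneg _))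
          (mul_le_mul_of_nonneg_left (abs_sub_sin_le a) (abs_nonneg _))
    _ = _ := by ring

theorem abs_div_sub_mul_le {c s N w : ℝ} (hN : 0 ≤ N) (hw : |w| ≤ N) :
    |(c / N - s) * w| ≤ |c - s * N| := by
  rcases hN.eq_or_lt with rfl | hN
  · simp [abs_nonpos_iff.mp hw]
  · calc |(c / N - s) * w| = |c - s * N| * (|w| / N) := by
          rw [← abs_of_pos hN, ← abs_div, ← abs_mul, abs_of_pos hN]
          congr 1; field_simp
      _ ≤ |c - s * N| := mul_le_of_le_one_right (abs_nonneg _) ((div_le_one hN).mpr hw)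

section SphereGeodesic

variable {E : Type*} [NormedAddCommGroup E] [InnerProductSpace ℝ E]

def sphereGeodesic (x p : E) (t : ℝ) : E :=
  cos (‖p‖ * t) • x + (sin (‖p‖ * t) / ‖p‖) • p

def geodesicInnerRemainder (x y p q : E) (t : ℝ) : ℝ :=
  ⟪sphereGeodesic x p t, sphereGeodesic y q t⟫ - ⟪x, y⟫ - t * (⟪x, q⟫ + ⟪p, y⟫)
    - t ^ 2 * (⟪p, q⟫ - (‖p‖ ^ 2 + ‖q‖ ^ 2) / 2 * ⟪x, y⟫)

theorem geodesicInnerRemainder_eq (x y p q : E) (t : ℝ) :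
    geodesicInnerRemainder x y p q t =
      (cos (‖p‖ * t) * cos (‖q‖ * t) - (1 - ((‖p‖ * t) ^ 2 + (‖q‖ * t) ^ 2) / 2)) * ⟪x, y⟫
      + (cos (‖p‖ * t) * sin (‖q‖ * t) / ‖q‖ - t) * ⟪x, q⟫
      + (cos (‖q‖ * t) * sin (‖p‖ * t) / ‖p‖ - t) * ⟪p, y⟫
      + (sin (‖p‖ * t) * sin (‖q‖ * t) / (‖p‖ * ‖q‖) - t ^ 2) * ⟪p, q⟫ := by
  simp only [geodesicInnerRemainder, sphereGeodesic, inner_add_left, inner_add_right,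
    real_inner_smul_left, real_inner_smul_right]
  ring

theorem abs_geodesicInnerRemainder_le {x y p q : E} (hx : ‖x‖ = 1) (hy : ‖y‖ = 1)
    (hp : ‖p‖ ≤ 1) (hq : ‖q‖ ≤ 1) {t : ℝ} (ht0 : 0 ≤ t) (ht1 : t ≤ 1) :
    |geodesicInnerRemainder x y p q t| ≤ 5 / 2 * t ^ 3 := by
  set a := ‖p‖ * t
  set b := ‖q‖ * t
  have ha : 0 ≤ a := by positivity
  have hb : 0 ≤ b := by positivity
  have hat : a ≤ t := mul_le_of_le_one_left ht0 hp
  have hbt : b ≤ t := mul_le_of_le_one_left ht0 hq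
  have hxy : |(cos a * cos b - (1 - (a ^ 2 + b ^ 2) / 2)) * ⟪x, y⟫| ≤
      t ^ 2 * t ^ 2 / 4 + 5 / 96 * (t ^ 4 + t ^ 4) := by
    rw [abs_mul]
    refine mul_le_of_le_one_right (abs_nonneg _) ?_ |>.trans <|
      (abs_cos_mul_cos_sub_le ?_ ?_).trans (by gcongr)
    · simpa [hx, hy] using abs_real_inner_le_norm x y
    · rw [abs_of_nonneg ha]; linarith
    · rw [abs_of_nonneg hb]; linarith
  have hxq : |(cos a * sin b / ‖q‖ - t) * ⟪x, q⟫| ≤ t ^ 2 * t / 2 + t ^ 3 / 6 := by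
    have hcs := abs_cos_mul_sin_sub_le a b
    rw [abs_of_nonneg hb] at hcs
    refine (abs_div_sub_mul_le (norm_nonneg q) ?_).trans ?_
    · simpa [hx] using abs_real_inner_le_norm x q
    · rw [mul_comm t]; exact hcs.trans (by gcongr)
  have hpy : |(cos b * sin a / ‖p‖ - t) * ⟪p, y⟫| ≤ t ^ 2 * t / 2 + t ^ 3 / 6 := by
    have hcs := abs_cos_mul_sin_sub_le b a
    rw [abs_of_nonneg ha] at hcs
    refine (abs_div_sub_mul_le (norm_nonneg p) ?_).trans ?_
    · simpa [hy] using abs_real_inner_le_norm p y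
    · rw [mul_comm t]; exact hcs.trans (by gcongr)
  have hpq : |(sin a * sin b / (‖p‖ * ‖q‖) - t ^ 2) * ⟪p, q⟫| ≤
      (t * t ^ 3 + t * t ^ 3) / 6 := by
    have hss := abs_sin_mul_sin_sub_le a b
    rw [abs_of_nonneg ha, abs_of_nonneg hb] at hss
    refine (abs_div_sub_mul_le (by positivity) (abs_real_inner_le_norm p q)).trans ?_
    rw [show t ^ 2 * (‖p‖ * ‖q‖) = a * b by ring]
    exact hss.trans (by gcongr)
  have ht3 : 0 ≤ t ^ 3 := by positivity
  have ht4 : t ^ 4 ≤ t ^ 3 := pow_le_pow_of_le_one ht0 ht1 (by norm_num)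
  rw [geodesicInnerRemainder_eq]
  refine (abs_add_le _ _).trans <| (add_le_add_left (abs_add_three _ _ _) _).trans ?_
  linear_combination hxy + hxq + hpy + hpq + 33 / 48 * ht4 + 23 / 48 * ht3

end SphereGeodesic

theorem Matrix.IsSymm.sum_sum_mul_swap {ι R : Type*} [Fintype ι] [NonUnitalNonAssocSemiring R]
    {A : Matrix ι ι R} (hA : A.IsSymm) (F : ι → ι → R) :
    ∑ i, ∑ j, A i j * F j i = ∑ i, ∑ j, A i j * F i j := by
  rw [Finset.sum_comm]
  refine Finset.sum_congr rfl fun i _ => Finset.sum_congr rfl fun j _ => ?_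
  exact congrArg (· * F i j) (hA.apply i j)

theorem Matrix.IsSymm.sum_sum_mul_eq_zero {ι : Type*} [Fintype ι] {A : Matrix ι ι ℝ}
    (hA : A.IsSymm) {G : ι → ι → ℝ} (hG : ∀ i j, G j i = -G i j) :
    ∑ i, ∑ j, A i j * G i j = 0 := by
  have hneg : ∑ i, ∑ j, A i j * G j i = -∑ i, ∑ j, A i j * G i j := by
    simp only [← Finset.sum_neg_distrib, ← mul_neg, ← hG]
  linarith [hA.sum_sum_mul_swap G]

theorem abs_sum_sum_mul_le {ι : Type*} [Fintype ι] (A D : ι → ι → ℝ) {C : ℝ}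
    (hD : ∀ i j, |D i j| ≤ C) : |∑ i, ∑ j, A i j * D i j| ≤ (∑ i, ∑ j, |A i j|) * C := by
  simp only [Finset.sum_mul]
  refine (Finset.abs_sum_le_sum_abs _ _).trans <| Finset.sum_le_sum fun i _ =>
    (Finset.abs_sum_le_sum_abs _ _).trans <| Finset.sum_le_sum fun j _ => ?_
  rw [abs_mul]
  exact mul_le_mul_of_nonneg_left (hD i j) (abs_nonneg _)

theorem sum_sum_abs_le_mul_Anorm1 {n : ℕ} (A : Matrix (Fin n) (Fin n) ℝ) :
    ∑ i, ∑ j, |A i j| ≤ n * Anorm1 A := by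
  rw [Finset.sum_comm]
  calc ∑ j, ∑ i, |A i j| ≤ ∑ _j : Fin n, Anorm1 A :=
        Finset.sum_le_sum fun j _ =>
          le_ciSup (f := fun j => ∑ i, |A i j|) (Set.finite_range _).bddAbove j
    _ = n * Anorm1 A := by simp

theorem sq_norm_le_fnormSq {n r : ℕ} (u : Conf n r) (i : Fin n) : ‖u i‖ ^ 2 ≤ fnormSq u :=
  Finset.single_le_sum (f := fun j => ‖u j‖ ^ 2) (fun _ _ => sq_nonneg _) (Finset.mem_univ i)

section Objective

variable {n r : ℕ} {A : Matrix (Fin n) (Fin n) ℝ}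

theorem inner_gvec (hdiag : ∀ i, A i i = 0) (w : Pt r) (τ : Conf n r) (i : Fin n) :
    ⟪w, gvec A τ i⟫ = ∑ j, A i j * ⟪w, τ j⟫ := by
  simp only [gvec, inner_sum, real_inner_smul_right]
  rw [Finset.sum_erase_eq_sub (Finset.mem_univ i), hdiag i, zero_mul, sub_zero]

theorem geo_apply (σ u : Conf n r) (t : ℝ) (i : Fin n) :
    geo σ u t i = sphereGeodesic (σ i) (u i) t :=
  rfl

theorem fval_geo_sub_taylor_eq (hA : A.IsSymm) (hdiag : ∀ i, A i i = 0) (σ u : Conf n r)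
    (t : ℝ) :
    fval A (geo σ u t) - fval A σ - t * Gform A σ u - t ^ 2 / 2 * Hform A σ u =
      ∑ i, ∑ j, A i j * geodesicInnerRemainder (σ i) (σ j) (u i) (u j) t := by
  -- the cross terms only match after symmetrizing over `(i, j)`
  have hanti := hA.sum_sum_mul_eq_zero (G := fun i j =>
    t * (⟪σ i, u j⟫ - ⟪u i, σ j⟫) + t ^ 2 / 2 * (‖u i‖ ^ 2 - ‖u j‖ ^ 2) * ⟪σ i, σ j⟫)
    fun i j => by simp only [real_inner_comm (σ i), real_inner_comm (u i)]; ring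
  rw [← sub_eq_zero, ← hanti]
  simp only [fval, Gform, Hform, inner_gvec hdiag, Finset.mul_sum, ← Finset.sum_sub_distrib]
  refine Finset.sum_congr rfl fun i _ => Finset.sum_congr rfl fun j _ => ?_
  rw [geodesicInnerRemainder, geo_apply, geo_apply]
  ring

theorem stationary.gvec_eq {σ : Conf n r} (h : stationary A σ) (i : Fin n) :
    gvec A σ i = ‖gvec A σ i‖ • σ i := by
  rw [(h i).2, smul_smul, mul_inv_cancel₀ (norm_ne_zero_iff.mpr (h i).1), one_smul]

theorem stationary.inM {σ : Conf n r} (h : stationary A σ) : inM σ := fun i => by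
  rw [(h i).2, norm_smul, norm_inv, norm_norm, inv_mul_cancel₀ (norm_ne_zero_iff.mpr (h i).1)]

theorem stationary.Gform_eq_zero {σ u : Conf n r} (h : stationary A σ) (hu : tangent σ u) :
    Gform A σ u = 0 := by
  rw [Gform, Finset.sum_eq_zero fun i _ => ?_, mul_zero]
  rw [h.gvec_eq i, real_inner_smul_right, hu i, mul_zero]

theorem stationary.Hform_eq {σ : Conf n r} (h : stationary A σ) (u : Conf n r) :
    Hform A σ u = 2 * ∑ i, (⟪u i, gvec A u i⟫ - ‖u i‖ ^ 2 * ‖gvec A σ i‖) := by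
  have hσg (i : Fin n) : ⟪σ i, gvec A σ i⟫ = ‖gvec A σ i‖ := by
    conv_lhs => rw [h.gvec_eq i]
    rw [real_inner_smul_right, real_inner_self_eq_norm_sq, h.inM i, one_pow, mul_one]
  simp only [Hform, hσg]

end Objective

theorem stationary_taylor_bound_general {n r : ℕ}
    (A : Matrix (Fin n) (Fin n) ℝ) (hA : A.IsSymm) (hdiag : ∀ i, A i i = 0)
    (σb : Conf n r) (hstat : stationary A σb)
    (u : Conf n r) (hu : tangent σb u) (hun : fnormSq u = 1)
    (t : ℝ) (ht0 : 0 ≤ t) (ht1 : t ≤ 1) :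
    |fval A (geo σb u t) - fval A σb -
        t ^ 2 * ∑ i, (⟪u i, gvec A u i⟫ - ‖u i‖ ^ 2 * ‖gvec A σb i‖)|
      ≤ 5 * n * Anorm1 A / 2 * t ^ 3 := by
  have hrow (i : Fin n) : ‖u i‖ ≤ 1 :=
    (sq_le_one_iff₀ (norm_nonneg _)).mp (hun ▸ sq_norm_le_fnormSq u i)
  have hexpand := fval_geo_sub_taylor_eq hA hdiag σb u t
  rw [hstat.Gform_eq_zero hu, hstat.Hform_eq] at hexpand
  calc _ = |∑ i, ∑ j, A i j * geodesicInnerRemainder (σb i) (σb j) (u i) (u j) t| := by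
        rw [← hexpand]; ring_nf
    _ ≤ (∑ i, ∑ j, |A i j|) * (5 / 2 * t ^ 3) := abs_sum_sum_mul_le _ _ fun i j =>
        abs_geodesicInnerRemainder_le (hstat.inM i) (hstat.inM j) (hrow i) (hrow j) ht0 ht1
    _ ≤ n * Anorm1 A * (5 / 2 * t ^ 3) := by
        gcongr
        exact sum_sum_abs_le_mul_Anorm1 A
    _ = 5 * n * Anorm1 A / 2 * t ^ 3 := by ring

/-- second-order Taylor approximation of `f` at a stationary point,
with explicit cubic error. -/
theorem stationary_taylor_bound {n r : ℕ} (hn : 0 < n) (hr : 0 < r)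
    (A : Matrix (Fin n) (Fin n) ℝ) (hA : A.IsSymm) (hdiag : ∀ i, A i i = 0)
    (σb : Conf n r) (hσb : inM σb) (hstat : stationary A σb)
    (u : Conf n r) (hu : tangent σb u) (hun : fnormSq u = 1)
    (t : ℝ) (ht0 : 0 ≤ t) (ht1 : t ≤ 1) :
    |fval A (geo σb u t) - fval A σb -
        t ^ 2 * ∑ i, (⟪u i, gvec A u i⟫ - ‖u i‖ ^ 2 * ‖gvec A σb i‖)|
      ≤ 5 * n * Anorm1 A / 2 * t ^ 3 :=
  stationary_taylor_bound_general A hA hdiag σb hstat u hu hun t ht0 ht1
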